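/- Let L0 be shared between frames F1, F2, let lsrc ⊆ LEFT0, and let B_c be both an lcut0-run of F1 and an lcut0-run of F2. Then the lsrc-runs compatible with B_c are the same in both frames: J^1_{lcut0→lsrc}(B_c) = J^2_{lcut0→lsrc}(B_c). -/
import Mathlib


open scoped Classical

/-- A (static) frame over ambient types of locations, channels and data:
a set `LO` of locations, a set `CH` of channels, sender and recipient
endpoints for channels, and for each location a prefix-closed set of
finite-or-infinite sequences of labels `(c, v)` (represented as functions
`ℕ → Option (Chan × D)` with initial-segment domain). -/
structure Frame (Loc Chan D : Type) where
  LO : Set Loc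
  CH : Set Chan
  sender : Chan → Loc
  recipt : Chan → Loc
  sender_mem : ∀ c ∈ CH, sender c ∈ LO
  recipt_mem : ∀ c ∈ CH, recipt c ∈ LO
  traces : Loc → Set (ℕ → Option (Chan × D))
  traces_dom : ∀ ℓ, ∀ t ∈ traces ℓ, ∀ m n : ℕ, m ≤ n → t n ≠ none → t m ≠ none
  traces_labels : ∀ ℓ, ∀ t ∈ traces ℓ, ∀ n c v, t n = some (c, v) →
    c ∈ CH ∧ (sender c = ℓ ∨ recipt c = ℓ)
  traces_prefix : ∀ ℓ, ∀ t ∈ traces ℓ, ∀ n : ℕ,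
    (fun m => if m < n then t m else none) ∈ traces ℓ

/-- Raw data of a system of events: a carrier set of events with a relation. -/
structure EvStruct (E : Type) where
  carrier : Set E
  rel : E → E → Prop

variable {Loc Chan D E : Type}

/-- `B` is a system of events: `rel` is a partial order on `carrier`, and every
event has only finitely many predecessors. -/
def IsSysEv (B : EvStruct E) : Prop :=
  (∀ a b, B.rel a b → a ∈ B.carrier ∧ b ∈ B.carrier) ∧
  (∀ a ∈ B.carrier, B.rel a a) ∧
  (∀ a b, B.rel a b → B.rel b a → a = b) ∧
  (∀ a b c, B.rel a b → B.rel b c → B.rel a c) ∧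
  (∀ a ∈ B.carrier, {x | B.rel x a}.Finite)

/-- The events of `B` whose channel has `ℓ` as sender or recipient. -/
def evProj (F : Frame Loc Chan D) (chan : E → Chan) (B : EvStruct E) (ℓ : Loc) :
    Set E :=
  {e | e ∈ B.carrier ∧ (F.sender (chan e) = ℓ ∨ F.recipt (chan e) = ℓ)}

/-- The projection of `B` to location `ℓ`, viewed as a sequence of labels: the
`n`-th entry is the label of the event of `evProj F chan B ℓ` having exactly
`n` strict predecessors there. -/
noncomputable def projSeq (F : Frame Loc Chan D) (chan : E → Chan) (msg : E → D)
    (B : EvStruct E) (ℓ : Loc) : ℕ → Option (Chan × D) := fun n =>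
  if h : ∃ e, e ∈ evProj F chan B ℓ ∧
      Set.ncard {e' | e' ∈ evProj F chan B ℓ ∧ B.rel e' e ∧ e' ≠ e} = n
  then some (chan h.choose, msg h.choose)
  else none

/-- `B` is an execution of `F`: a system of events on the channels of `F`
whose projection to each location of `F` is linearly ordered and, viewed as
a sequence, a trace of that location. -/
def IsExec (F : Frame Loc Chan D) (chan : E → Chan) (msg : E → D)
    (B : EvStruct E) : Prop :=
  IsSysEv B ∧ (∀ e ∈ B.carrier, chan e ∈ F.CH) ∧
  ∀ ℓ ∈ F.LO,
    (∀ a ∈ evProj F chan B ℓ, ∀ b ∈ evProj F chan B ℓ, B.rel a b ∨ B.rel b a) ∧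
    projSeq F chan msg B ℓ ∈ F.traces ℓ

/-- Restriction `B|C` of `B` to the events whose channel lies in `C`. -/
def evRestrict (chan : E → Chan) (B : EvStruct E) (C : Set Chan) : EvStruct E where
  carrier := {e | e ∈ B.carrier ∧ chan e ∈ C}
  rel := fun a b => B.rel a b ∧ chan a ∈ C ∧ chan b ∈ C

/-- `lruns C`: the `C`-runs of `F`, i.e. restrictions to `C` of executions. -/
def lruns (F : Frame Loc Chan D) (chan : E → Chan) (msg : E → D) (C : Set Chan) :
    Set (EvStruct E) :=
  {B | ∃ A : EvStruct E, IsExec F chan msg A ∧ evRestrict chan A C = B}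

/-- `J_{C→C'}(B)`: the `C'`-runs compatible with `B`, computed in `F`. -/
def cmpt (F : Frame Loc Chan D) (chan : E → Chan) (msg : E → D)
    (C C' : Set Chan) (B : EvStruct E) : Set (EvStruct E) :=
  {B' | ∃ A : EvStruct E, IsExec F chan msg A ∧
      evRestrict chan A C = B ∧ evRestrict chan A C' = B'}

/-- `L0` is shared between `F1` and `F2`: `L0` lies in the locations of both,
and every `ℓ ∈ L0` has the same channel endpoints and trace set in both. -/
def Shared (F1 F2 : Frame Loc Chan D) (L0 : Set Loc) : Prop :=
  L0 ⊆ F1.LO ∧ L0 ⊆ F2.LO ∧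
  ∀ ℓ ∈ L0,
    ({c | c ∈ F1.CH ∧ F1.sender c = ℓ} = {c | c ∈ F2.CH ∧ F2.sender c = ℓ}) ∧
    ({c | c ∈ F1.CH ∧ F1.recipt c = ℓ} = {c | c ∈ F2.CH ∧ F2.recipt c = ℓ}) ∧
    F1.traces ℓ = F2.traces ℓ

/-- The channels of `F` with both endpoints in `L0`. -/
def LEFT0 (F : Frame Loc Chan D) (L0 : Set Loc) : Set Chan :=
  {c | c ∈ F.CH ∧ F.sender c ∈ L0 ∧ F.recipt c ∈ L0}

/-- The channels of `F` with exactly one endpoint in `L0`. -/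
def lcut0 (F : Frame Loc Chan D) (L0 : Set Loc) : Set Chan :=
  {c | c ∈ F.CH ∧ Xor' (F.sender c ∈ L0) (F.recipt c ∈ L0)}

/-- The channels of `F` with no endpoint in `L0`. -/
def RIGHTchans (F : Frame Loc Chan D) (L0 : Set Loc) : Set Chan :=
  {c | c ∈ F.CH ∧ F.sender c ∉ L0 ∧ F.recipt c ∉ L0}

/- ------------------- auxiliary lemmas ------------------- -/

lemma evExt {B1 B2 : EvStruct E} (h1 : B1.carrier = B2.carrier)
    (h2 : B1.rel = B2.rel) : B1 = B2 := by
  cases B1; cases B2; cases h1; cases h2; rfl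

lemma predFin {B : EvStruct E} (hB : IsSysEv B) (a : E) :
    {x | B.rel x a}.Finite := by
  by_cases h : ∃ x, B.rel x a
  · obtain ⟨x, hx⟩ := h
    exact hB.2.2.2.2 a (hB.1 x a hx).2
  · have : {x | B.rel x a} = ∅ := by
      ext x; simp only [Set.mem_setOf_eq, Set.mem_empty_iff_false, iff_false]
      exact fun hx => h ⟨x, hx⟩
    rw [this]; exact Set.finite_empty

/-- strict-predecessor counts are injective along a chain -/
lemma count_lt {B : EvStruct E} (hB : IsSysEv B) {S : Set E}
    (hS : S ⊆ B.carrier) {e1 e2 : E} (h1 : e1 ∈ S) (h2 : e2 ∈ S)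
    (hr : B.rel e1 e2) (hne : e1 ≠ e2) :
    ({e' | e' ∈ S ∧ B.rel e' e1 ∧ e' ≠ e1}).ncard <
      ({e' | e' ∈ S ∧ B.rel e' e2 ∧ e' ≠ e2}).ncard := by
  obtain ⟨hdom, hrefl, hanti, htrans, hfin⟩ := hB
  have hfin2 : ({e' | e' ∈ S ∧ B.rel e' e2 ∧ e' ≠ e2}).Finite :=
    (predFin ⟨hdom, hrefl, hanti, htrans, hfin⟩ e2).subset
      (fun x hx => hx.2.1)
  apply Set.ncard_lt_ncard _ hfin2
  constructor
  · intro x hx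
    refine ⟨hx.1, htrans _ _ _ hx.2.1 hr, ?_⟩
    intro hxe2; subst hxe2
    exact hne (hanti _ _ hr hx.2.1)
  · intro hsub
    have he1 : e1 ∈ {e' | e' ∈ S ∧ B.rel e' e2 ∧ e' ≠ e2} := ⟨h1, hr, hne⟩
    have := hsub he1
    exact this.2.2 rfl

lemma count_unique {B : EvStruct E} (hB : IsSysEv B) {S : Set E}
    (hS : S ⊆ B.carrier)
    (hlin : ∀ a ∈ S, ∀ b ∈ S, B.rel a b ∨ B.rel b a)
    {e1 e2 : E} (h1 : e1 ∈ S) (h2 : e2 ∈ S)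
    (hn : ({e' | e' ∈ S ∧ B.rel e' e1 ∧ e' ≠ e1}).ncard =
      ({e' | e' ∈ S ∧ B.rel e' e2 ∧ e' ≠ e2}).ncard) : e1 = e2 := by
  by_contra hne
  rcases hlin e1 h1 e2 h2 with h | h
  · exact absurd hn (Nat.ne_of_lt (count_lt hB hS h1 h2 h hne))
  · exact absurd hn.symm (Nat.ne_of_lt (count_lt hB hS h2 h1 h (Ne.symm hne)))

lemma projSeq_congr (F F' : Frame Loc Chan D) (chan : E → Chan) (msg : E → D)
    (B B' : EvStruct E) (ℓ ℓ' : Loc)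
    (hS : evProj F chan B ℓ = evProj F' chan B' ℓ')
    (hrel : ∀ a ∈ evProj F chan B ℓ, ∀ b ∈ evProj F chan B ℓ,
      (B.rel a b ↔ B'.rel a b))
    (hlin : ∀ a ∈ evProj F chan B ℓ, ∀ b ∈ evProj F chan B ℓ,
      B.rel a b ∨ B.rel b a)
    (hB : IsSysEv B) :
    projSeq F chan msg B ℓ = projSeq F' chan msg B' ℓ' := by
  have hScar : evProj F chan B ℓ ⊆ B.carrier := fun x hx => hx.1
  have hpred : ∀ e ∈ evProj F chan B ℓ,
      {e' | e' ∈ evProj F chan B ℓ ∧ B.rel e' e ∧ e' ≠ e} =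
      {e' | e' ∈ evProj F' chan B' ℓ' ∧ B'.rel e' e ∧ e' ≠ e} := by
    intro e he
    ext x; simp only [Set.mem_setOf_eq]
    constructor
    · rintro ⟨hx, hr, hne⟩
      exact ⟨hS ▸ hx, (hrel x hx e he).mp hr, hne⟩
    · rintro ⟨hx, hr, hne⟩
      have hx' : x ∈ evProj F chan B ℓ := hS ▸ hx
      exact ⟨hx', (hrel x hx' e he).mpr hr, hne⟩
  funext n
  unfold projSeq
  have hiff : (∃ e, e ∈ evProj F chan B ℓ ∧
      Set.ncard {e' | e' ∈ evProj F chan B ℓ ∧ B.rel e' e ∧ e' ≠ e} = n) ↔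
      (∃ e, e ∈ evProj F' chan B' ℓ' ∧
      Set.ncard {e' | e' ∈ evProj F' chan B' ℓ' ∧ B'.rel e' e ∧ e' ≠ e} = n) := by
    constructor
    · rintro ⟨e, he, hc⟩
      exact ⟨e, hS ▸ he, by rw [← hpred e he]; exact hc⟩
    · rintro ⟨e, he, hc⟩
      have he' : e ∈ evProj F chan B ℓ := hS ▸ he
      exact ⟨e, he', by rw [hpred e he']; exact hc⟩
  by_cases h : ∃ e, e ∈ evProj F chan B ℓ ∧
      Set.ncard {e' | e' ∈ evProj F chan B ℓ ∧ B.rel e' e ∧ e' ≠ e} = n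
  · have h' := hiff.mp h
    rw [dif_pos h, dif_pos h']
    have s1 := h.choose_spec
    have s2 := h'.choose_spec
    have m2 : h'.choose ∈ evProj F chan B ℓ := by rw [hS]; exact s2.1
    have c2 : Set.ncard {e' | e' ∈ evProj F chan B ℓ ∧ B.rel e' h'.choose ∧
        e' ≠ h'.choose} = n := by
      rw [hpred h'.choose m2]; exact s2.2
    have : h.choose = h'.choose :=
      count_unique hB hScar hlin s1.1 m2 (s1.2.trans c2.symm)
    rw [this]
  · rw [dif_neg h, dif_neg (fun hh => h (hiff.mpr hh))]

/- ------------------- shared-frame lemmas ------------------- -/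

lemma Shared.symm {F1 F2 : Frame Loc Chan D} {L0 : Set Loc}
    (h : Shared F1 F2 L0) : Shared F2 F1 L0 :=
  ⟨h.2.1, h.1, fun ℓ hℓ =>
    ⟨(h.2.2 ℓ hℓ).1.symm, (h.2.2 ℓ hℓ).2.1.symm, (h.2.2 ℓ hℓ).2.2.symm⟩⟩

lemma shared_senderIff {F1 F2 : Frame Loc Chan D} {L0 : Set Loc}
    (hsh : Shared F1 F2 L0) {ℓ : Loc} (hℓ : ℓ ∈ L0) (c : Chan) :
    (c ∈ F1.CH ∧ F1.sender c = ℓ) ↔ (c ∈ F2.CH ∧ F2.sender c = ℓ) :=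
  Set.ext_iff.mp (hsh.2.2 ℓ hℓ).1 c

lemma shared_reciptIff {F1 F2 : Frame Loc Chan D} {L0 : Set Loc}
    (hsh : Shared F1 F2 L0) {ℓ : Loc} (hℓ : ℓ ∈ L0) (c : Chan) :
    (c ∈ F1.CH ∧ F1.recipt c = ℓ) ↔ (c ∈ F2.CH ∧ F2.recipt c = ℓ) :=
  Set.ext_iff.mp (hsh.2.2 ℓ hℓ).2.1 c

lemma push_sender {F1 F2 : Frame Loc Chan D} {L0 : Set Loc}
    (hsh : Shared F1 F2 L0) {c : Chan} (h1 : c ∈ F1.CH)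
    (h2 : F1.sender c ∈ L0) : c ∈ F2.CH ∧ F2.sender c = F1.sender c :=
  (shared_senderIff hsh h2 c).mp ⟨h1, rfl⟩

lemma push_recipt {F1 F2 : Frame Loc Chan D} {L0 : Set Loc}
    (hsh : Shared F1 F2 L0) {c : Chan} (h1 : c ∈ F1.CH)
    (h2 : F1.recipt c ∈ L0) : c ∈ F2.CH ∧ F2.recipt c = F1.recipt c :=
  (shared_reciptIff hsh h2 c).mp ⟨h1, rfl⟩

lemma lcut0_subset {F1 F2 : Frame Loc Chan D} {L0 : Set Loc}
    (hsh : Shared F1 F2 L0) : lcut0 F1 L0 ⊆ lcut0 F2 L0 := by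
  rintro c ⟨h1, hx⟩
  rcases hx with ⟨hs, hr⟩ | ⟨hr, hs⟩
  · obtain ⟨h2, hse⟩ := push_sender hsh h1 hs
    refine ⟨h2, Or.inl ⟨by rw [hse]; exact hs, fun h2r => ?_⟩⟩
    obtain ⟨_, hre⟩ := push_recipt hsh.symm h2 h2r
    exact hr (by rw [hre]; exact h2r)
  · obtain ⟨h2, hre⟩ := push_recipt hsh h1 hr
    refine ⟨h2, Or.inr ⟨by rw [hre]; exact hr, fun h2s => ?_⟩⟩
    obtain ⟨_, hse⟩ := push_sender hsh.symm h2 h2s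
    exact hs (by rw [hse]; exact h2s)

lemma lcut0_eq {F1 F2 : Frame Loc Chan D} {L0 : Set Loc}
    (hsh : Shared F1 F2 L0) : lcut0 F1 L0 = lcut0 F2 L0 :=
  Set.Subset.antisymm (lcut0_subset hsh) (lcut0_subset hsh.symm)

lemma LEFT0_subset {F1 F2 : Frame Loc Chan D} {L0 : Set Loc}
    (hsh : Shared F1 F2 L0) : LEFT0 F1 L0 ⊆ LEFT0 F2 L0 := by
  rintro c ⟨h1, hs, hr⟩
  obtain ⟨h2, hse⟩ := push_sender hsh h1 hs
  obtain ⟨_, hre⟩ := push_recipt hsh h1 hr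
  exact ⟨h2, by rw [hse]; exact hs, by rw [hre]; exact hr⟩

lemma LEFT0_eq {F1 F2 : Frame Loc Chan D} {L0 : Set Loc}
    (hsh : Shared F1 F2 L0) : LEFT0 F1 L0 = LEFT0 F2 L0 :=
  Set.Subset.antisymm (LEFT0_subset hsh) (LEFT0_subset hsh.symm)

lemma left_not_right {F1 F2 : Frame Loc Chan D} {L0 : Set Loc}
    (hsh : Shared F1 F2 L0) {c : Chan} (h1 : c ∈ F1.CH)
    (h2 : F1.sender c ∈ L0 ∨ F1.recipt c ∈ L0) :
    c ∉ RIGHTchans F2 L0 := by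
  rintro ⟨_, hs2, hr2⟩
  rcases h2 with h | h
  · obtain ⟨_, hse⟩ := push_sender hsh h1 h
    exact hs2 (by rw [hse]; exact h)
  · obtain ⟨_, hre⟩ := push_recipt hsh h1 h
    exact hr2 (by rw [hre]; exact h)

/- ------------------- the gluing construction ------------------- -/

section Glue

variable (F1 F2 : Frame Loc Chan D) (chan : E → Chan) (L0 : Set Loc)
variable (A1 A2 : EvStruct E)

/-- events of `A1` on channels with an `F1`-endpoint in `L0` -/
def LeftE : Set E :=
  {e | e ∈ A1.carrier ∧ chan e ∈ F1.CH ∧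
    (F1.sender (chan e) ∈ L0 ∨ F1.recipt (chan e) ∈ L0)}

/-- events of `A2` on right or cut channels -/
def RightE : Set E :=
  {e | e ∈ A2.carrier ∧
    (chan e ∈ RIGHTchans F2 L0 ∨ chan e ∈ lcut0 F1 L0)}

/-- the glued order -/
def GRel : E → E → Prop := fun a b =>
  (A1.rel a b ∧ a ∈ LeftE F1 chan L0 A1 ∧ b ∈ LeftE F1 chan L0 A1) ∨
  (A2.rel a b ∧ a ∈ RightE F1 F2 chan L0 A2 ∧ b ∈ RightE F1 F2 chan L0 A2) ∨
  (∃ m, (A1.rel a m ∧ a ∈ LeftE F1 chan L0 A1 ∧ m ∈ LeftE F1 chan L0 A1) ∧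
    (A2.rel m b ∧ m ∈ RightE F1 F2 chan L0 A2 ∧ b ∈ RightE F1 F2 chan L0 A2)) ∨
  (∃ m, (A2.rel a m ∧ a ∈ RightE F1 F2 chan L0 A2 ∧ m ∈ RightE F1 F2 chan L0 A2) ∧
    (A1.rel m b ∧ m ∈ LeftE F1 chan L0 A1 ∧ b ∈ LeftE F1 chan L0 A1))

/-- the glued system of events -/
def glue : EvStruct E :=
  ⟨LeftE F1 chan L0 A1 ∪ RightE F1 F2 chan L0 A2, GRel F1 F2 chan L0 A1 A2⟩

end Glue

section GlueLemmas

variable {F1 F2 : Frame Loc Chan D} {chan : E → Chan} {L0 : Set Loc}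
variable {A1 A2 : EvStruct E}

lemma mem_cut_of_LR (hsh : Shared F1 F2 L0) {e : E}
    (hL : e ∈ LeftE F1 chan L0 A1) (hR : e ∈ RightE F1 F2 chan L0 A2) :
    chan e ∈ lcut0 F1 L0 := by
  simp only [LeftE, Set.mem_setOf_eq] at hL
  simp only [RightE, Set.mem_setOf_eq] at hR
  rcases hR.2 with h | h
  · exact absurd h (left_not_right hsh hL.2.1 hL.2.2)
  · exact h

lemma cut_mem_LeftE {e : E} (hc : chan e ∈ lcut0 F1 L0)
    (he : e ∈ A1.carrier) : e ∈ LeftE F1 chan L0 A1 := by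
  refine ⟨he, hc.1, ?_⟩
  rcases hc.2 with ⟨h, _⟩ | ⟨h, _⟩
  · exact Or.inl h
  · exact Or.inr h

lemma cut_mem_RightE {e : E} (hc : chan e ∈ lcut0 F1 L0)
    (he : e ∈ A2.carrier) : e ∈ RightE F1 F2 chan L0 A2 :=
  ⟨he, Or.inr hc⟩

section WithHyps

variable (hsh : Shared F1 F2 L0)
variable (h1sys : IsSysEv A1) (h2sys : IsSysEv A2)
variable (hrel : ∀ a b : E, chan a ∈ lcut0 F1 L0 → chan b ∈ lcut0 F1 L0 →
  (A1.rel a b ↔ A2.rel a b))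

include hsh hrel in
lemma rel12 {x y : E}
    (hxL : x ∈ LeftE F1 chan L0 A1) (hxR : x ∈ RightE F1 F2 chan L0 A2)
    (hyL : y ∈ LeftE F1 chan L0 A1) (hyR : y ∈ RightE F1 F2 chan L0 A2)
    (h : A1.rel x y) : A2.rel x y :=
  (hrel x y (mem_cut_of_LR hsh hxL hxR) (mem_cut_of_LR hsh hyL hyR)).mp h

include hsh hrel in
lemma rel21 {x y : E}
    (hxL : x ∈ LeftE F1 chan L0 A1) (hxR : x ∈ RightE F1 F2 chan L0 A2)
    (hyL : y ∈ LeftE F1 chan L0 A1) (hyR : y ∈ RightE F1 F2 chan L0 A2)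
    (h : A2.rel x y) : A1.rel x y :=
  (hrel x y (mem_cut_of_LR hsh hxL hxR) (mem_cut_of_LR hsh hyL hyR)).mpr h

include hsh h1sys hrel in
lemma grel_left {a b : E}
    (ha : a ∈ LeftE F1 chan L0 A1) (hb : b ∈ LeftE F1 chan L0 A1) :
    GRel F1 F2 chan L0 A1 A2 a b ↔ A1.rel a b := by
  constructor
  · rintro (⟨r, -, -⟩ | ⟨r, haR, hbR⟩ | ⟨m, ⟨r1, -, hmL⟩, ⟨r2, hmR, hbR⟩⟩ |
      ⟨m, ⟨r2, haR, hmR⟩, ⟨r1, hmL, -⟩⟩)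
    · exact r
    · exact rel21 hsh hrel ha haR hb hbR r
    · exact h1sys.2.2.2.1 _ _ _ r1 (rel21 hsh hrel hmL hmR hb hbR r2)
    · exact h1sys.2.2.2.1 _ _ _ (rel21 hsh hrel ha haR hmL hmR r2) r1
  · intro h; exact Or.inl ⟨h, ha, hb⟩

include hsh h2sys hrel in
lemma grel_right {a b : E}
    (ha : a ∈ RightE F1 F2 chan L0 A2) (hb : b ∈ RightE F1 F2 chan L0 A2) :
    GRel F1 F2 chan L0 A1 A2 a b ↔ A2.rel a b := by
  constructor
  · rintro (⟨r, haL, hbL⟩ | ⟨r, -, -⟩ | ⟨m, ⟨r1, haL, hmL⟩, ⟨r2, hmR, -⟩⟩ |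
      ⟨m, ⟨r2, -, hmR⟩, ⟨r1, hmL, hbL⟩⟩)
    · exact rel12 hsh hrel haL ha hbL hb r
    · exact r
    · exact h2sys.2.2.2.1 _ _ _ (rel12 hsh hrel haL ha hmL hmR r1) r2
    · exact h2sys.2.2.2.1 _ _ _ r2 (rel12 hsh hrel hmL hmR hbL hb r1)
  · intro h; exact Or.inr (Or.inl ⟨h, ha, hb⟩)

include hsh h1sys h2sys hrel in
lemma grel_trans {a b c : E} (hab : GRel F1 F2 chan L0 A1 A2 a b)
    (hbc : GRel F1 F2 chan L0 A1 A2 b c) : GRel F1 F2 chan L0 A1 A2 a c := by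
  have t1 := h1sys.2.2.2.1
  have t2 := h2sys.2.2.2.1
  have i12 := fun {x y} hxL hxR hyL hyR h => rel12 (A1 := A1) hsh hrel
    (x := x) (y := y) hxL hxR hyL hyR h
  have i21 := fun {x y} hxL hxR hyL hyR h => rel21 (A1 := A1) hsh hrel
    (x := x) (y := y) hxL hxR hyL hyR h
  rcases hab with ⟨r, ha, hb⟩ | ⟨r, ha, hb⟩ |
      ⟨m, ⟨r1, ha, hmL⟩, ⟨r2, hmR, hb⟩⟩ | ⟨m, ⟨r2, ha, hmR⟩, ⟨r1, hmL, hb⟩⟩ <;>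
    rcases hbc with ⟨r', hb', hc⟩ | ⟨r', hb', hc⟩ |
      ⟨m2, ⟨r1', hb', hm2L⟩, ⟨r2', hm2R, hc⟩⟩ |
      ⟨m2, ⟨r2', hb', hm2R⟩, ⟨r1', hm2L, hc⟩⟩
  -- a→b is P1
  · exact Or.inl ⟨t1 _ _ _ r r', ha, hc⟩
  · exact Or.inr (Or.inr (Or.inl ⟨b, ⟨r, ha, hb⟩, ⟨r', hb', hc⟩⟩))
  · exact Or.inr (Or.inr (Or.inl ⟨m2, ⟨t1 _ _ _ r r1', ha, hm2L⟩,
      ⟨r2', hm2R, hc⟩⟩))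
  · exact Or.inl ⟨t1 _ _ _ (t1 _ _ _ r (i21 hb hb' hm2L hm2R r2')) r1', ha, hc⟩
  -- a→b is P2
  · exact Or.inr (Or.inr (Or.inr ⟨b, ⟨r, ha, hb⟩, ⟨r', hb', hc⟩⟩))
  · exact Or.inr (Or.inl ⟨t2 _ _ _ r r', ha, hc⟩)
  · exact Or.inr (Or.inl ⟨t2 _ _ _ (t2 _ _ _ r (i12 hb' hb hm2L hm2R r1')) r2',
      ha, hc⟩)
  · exact Or.inr (Or.inr (Or.inr ⟨m2, ⟨t2 _ _ _ r r2', ha, hm2R⟩,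
      ⟨r1', hm2L, hc⟩⟩))
  -- a→b is P3
  · exact Or.inl ⟨t1 _ _ _ (t1 _ _ _ r1 (i21 hmL hmR hb' hb r2)) r', ha, hc⟩
  · exact Or.inr (Or.inr (Or.inl ⟨m, ⟨r1, ha, hmL⟩, ⟨t2 _ _ _ r2 r', hmR, hc⟩⟩))
  · exact Or.inr (Or.inr (Or.inl ⟨m2,
      ⟨t1 _ _ _ (t1 _ _ _ r1 (i21 hmL hmR hb' hb r2)) r1', ha, hm2L⟩,
      ⟨r2', hm2R, hc⟩⟩))
  · exact Or.inl ⟨t1 _ _ _ (t1 _ _ _ r1 (i21 hmL hmR hm2L hm2R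
      (t2 _ _ _ r2 r2'))) r1', ha, hc⟩
  -- a→b is P4
  · exact Or.inr (Or.inr (Or.inr ⟨m, ⟨r2, ha, hmR⟩, ⟨t1 _ _ _ r1 r', hmL, hc⟩⟩))
  · exact Or.inr (Or.inl ⟨t2 _ _ _ (t2 _ _ _ r2 (i12 hmL hmR hb hb' r1)) r',
      ha, hc⟩)
  · exact Or.inr (Or.inl ⟨t2 _ _ _ (t2 _ _ _ r2 (i12 hmL hmR hm2L hm2R
      (t1 _ _ _ r1 r1'))) r2', ha, hc⟩)
  · exact Or.inr (Or.inr (Or.inr ⟨m2,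
      ⟨t2 _ _ _ (t2 _ _ _ r2 (i12 hmL hmR hb hb' r1)) r2', ha, hm2R⟩,
      ⟨r1', hm2L, hc⟩⟩))

include hsh h1sys h2sys hrel in
lemma grel_antisymm {a b : E} (hab : GRel F1 F2 chan L0 A1 A2 a b)
    (hba : GRel F1 F2 chan L0 A1 A2 b a) : a = b := by
  have t1 := h1sys.2.2.2.1
  have t2 := h2sys.2.2.2.1
  have an1 := h1sys.2.2.1
  have an2 := h2sys.2.2.1
  have easyL : ∀ {x y : E}, x ∈ LeftE F1 chan L0 A1 → y ∈ LeftE F1 chan L0 A1 →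
      GRel F1 F2 chan L0 A1 A2 x y → GRel F1 F2 chan L0 A1 A2 y x → x = y :=
    fun hx hy g1 g2 => an1 _ _ ((grel_left hsh h1sys hrel hx hy).mp g1)
      ((grel_left hsh h1sys hrel hy hx).mp g2)
  have easyR : ∀ {x y : E}, x ∈ RightE F1 F2 chan L0 A2 →
      y ∈ RightE F1 F2 chan L0 A2 →
      GRel F1 F2 chan L0 A1 A2 x y → GRel F1 F2 chan L0 A1 A2 y x → x = y :=
    fun hx hy g1 g2 => an2 _ _ ((grel_right hsh h2sys hrel hx hy).mp g1)
      ((grel_right hsh h2sys hrel hy hx).mp g2)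
  have H1 := hab
  have H2 := hba
  rcases hab with ⟨-, ha, hb⟩ | ⟨-, ha, hb⟩ |
      ⟨m, ⟨r1, ha, hmL⟩, ⟨r2, hmR, hb⟩⟩ | ⟨m, ⟨r2, ha, hmR⟩, ⟨r1, hmL, hb⟩⟩
  · exact easyL ha hb H1 H2
  · exact easyR ha hb H1 H2
  · -- a →₁ m →₂ b , with a ∈ L, b ∈ R
    rcases hba with ⟨-, hb', ha'⟩ | ⟨-, hb', ha'⟩ |
        ⟨m2, ⟨r1', hb', hm2L⟩, ⟨r2', hm2R, ha'⟩⟩ |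
        ⟨m2, ⟨r2', hb', hm2R⟩, ⟨r1', hm2L, ha'⟩⟩
    · exact easyL ha hb' H1 H2
    · exact easyR ha' hb H1 H2
    · exact easyL ha hb' H1 H2
    · -- hard case: b →₂ m2 →₁ a
      have hmm2 : A1.rel m m2 :=
        rel21 hsh hrel hmL hmR hm2L hm2R (t2 _ _ _ r2 r2')
      have e1 : a = m2 := an1 _ _ (t1 _ _ _ r1 hmm2) r1'
      subst e1
      have e2 : a = m := an1 _ _ r1 hmm2
      subst e2
      exact an2 _ _ r2 r2'
  · -- a →₂ m →₁ b , with a ∈ R, b ∈ L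
    rcases hba with ⟨-, hb', ha'⟩ | ⟨-, hb', ha'⟩ |
        ⟨m2, ⟨r1', hb', hm2L⟩, ⟨r2', hm2R, ha'⟩⟩ |
        ⟨m2, ⟨r2', hb', hm2R⟩, ⟨r1', hm2L, ha'⟩⟩
    · exact easyL ha' hb H1 H2
    · exact easyR ha hb' H1 H2
    · -- hard case: b →₁ m2 →₂ a
      have hmm2 : A2.rel m m2 :=
        rel12 hsh hrel hmL hmR hm2L hm2R (t1 _ _ _ r1 r1')
      have e1 : a = m2 := an2 _ _ (t2 _ _ _ r2 hmm2) r2'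
      subst e1
      have e2 : a = m := an2 _ _ r2 hmm2
      subst e2
      exact an1 _ _ r1 r1'
    · exact easyL ha' hb H1 H2

include hsh h1sys h2sys hrel in
lemma glue_sysEv : IsSysEv (glue F1 F2 chan L0 A1 A2) := by
  refine ⟨?_, ?_, ?_, ?_, ?_⟩
  · rintro a b (⟨-, ha, hb⟩ | ⟨-, ha, hb⟩ | ⟨m, ⟨-, ha, -⟩, ⟨-, -, hb⟩⟩ |
      ⟨m, ⟨-, ha, -⟩, ⟨-, -, hb⟩⟩)
    · exact ⟨Or.inl ha, Or.inl hb⟩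
    · exact ⟨Or.inr ha, Or.inr hb⟩
    · exact ⟨Or.inl ha, Or.inr hb⟩
    · exact ⟨Or.inr ha, Or.inl hb⟩
  · rintro a (ha | ha)
    · exact Or.inl ⟨h1sys.2.1 a ha.1, ha, ha⟩
    · exact Or.inr (Or.inl ⟨h2sys.2.1 a ha.1, ha, ha⟩)
  · exact fun a b => grel_antisymm hsh h1sys h2sys hrel
  · exact fun a b c => grel_trans hsh h1sys h2sys hrel
  · intro a _
    have hsub : {x | GRel F1 F2 chan L0 A1 A2 x a} ⊆
        ({x | A1.rel x a} ∪ {x | A2.rel x a}) ∪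
        ((⋃ m ∈ {m | A2.rel m a}, {x | A1.rel x m}) ∪
         (⋃ m ∈ {m | A1.rel m a}, {x | A2.rel x m})) := by
      rintro x (⟨r, -, -⟩ | ⟨r, -, -⟩ | ⟨m, ⟨r1, -, -⟩, ⟨r2, -, -⟩⟩ |
        ⟨m, ⟨r2, -, -⟩, ⟨r1, -, -⟩⟩)
      · exact Or.inl (Or.inl r)
      · exact Or.inl (Or.inr r)
      · exact Or.inr (Or.inl (Set.mem_biUnion r2 r1))
      · exact Or.inr (Or.inr (Set.mem_biUnion r1 r2))
    have hfin := Set.Finite.union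
      (Set.Finite.union (predFin h1sys a) (predFin h2sys a))
      (Set.Finite.union
        (Set.Finite.biUnion (predFin h2sys a) (fun m _ => predFin h1sys m))
        (Set.Finite.biUnion (predFin h1sys a) (fun m _ => predFin h2sys m)))
    exact hfin.subset hsub

end WithHyps

end GlueLemmas

lemma cmpt_sub_of_shared (F1 F2 : Frame Loc Chan D) (chan : E → Chan) (msg : E → D)
    (L0 : Set Loc) (hsh : Shared F1 F2 L0)
    (lsrc : Set Chan) (hsrc : lsrc ⊆ LEFT0 F1 L0)
    (Bc : EvStruct E) (hc2 : Bc ∈ lruns F2 chan msg (lcut0 F1 L0)) :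
    cmpt F1 chan msg (lcut0 F1 L0) lsrc Bc ⊆
      cmpt F2 chan msg (lcut0 F1 L0) lsrc Bc := by
  rintro B' ⟨A1, hA1ex, hA1cut, hA1src⟩
  obtain ⟨A2, hA2ex, hA2cut⟩ := hc2
  obtain ⟨h1sys, h1ch, h1loc⟩ := hA1ex
  obtain ⟨h2sys, h2ch, h2loc⟩ := hA2ex
  -- interface facts
  have cc1 := congrArg EvStruct.carrier hA1cut
  have cc2 := congrArg EvStruct.carrier hA2cut
  have cr1 := congrArg EvStruct.rel hA1cut
  have cr2 := congrArg EvStruct.rel hA2cut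
  have cutcar1 : ∀ e : E, (e ∈ A1.carrier ∧ chan e ∈ lcut0 F1 L0) ↔
      e ∈ Bc.carrier := by
    intro e; rw [← cc1]; exact Iff.rfl
  have cutcar2 : ∀ e : E, (e ∈ A2.carrier ∧ chan e ∈ lcut0 F1 L0) ↔
      e ∈ Bc.carrier := by
    intro e; rw [← cc2]; exact Iff.rfl
  have cutrel1 : ∀ a b : E, (A1.rel a b ∧ chan a ∈ lcut0 F1 L0 ∧
      chan b ∈ lcut0 F1 L0) ↔ Bc.rel a b := by
    intro a b; rw [← cr1]; exact Iff.rfl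
  have cutrel2 : ∀ a b : E, (A2.rel a b ∧ chan a ∈ lcut0 F1 L0 ∧
      chan b ∈ lcut0 F1 L0) ↔ Bc.rel a b := by
    intro a b; rw [← cr2]; exact Iff.rfl
  have hcar : ∀ e : E, chan e ∈ lcut0 F1 L0 →
      (e ∈ A1.carrier ↔ e ∈ A2.carrier) := by
    intro e hc
    constructor
    · intro h; exact ((cutcar2 e).mpr ((cutcar1 e).mp ⟨h, hc⟩)).1
    · intro h; exact ((cutcar1 e).mpr ((cutcar2 e).mp ⟨h, hc⟩)).1
  have hrel : ∀ a b : E, chan a ∈ lcut0 F1 L0 → chan b ∈ lcut0 F1 L0 →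
      (A1.rel a b ↔ A2.rel a b) := by
    intro a b ha hb
    constructor
    · intro h; exact ((cutrel2 a b).mpr ((cutrel1 a b).mp ⟨h, ha, hb⟩)).1
    · intro h; exact ((cutrel1 a b).mpr ((cutrel2 a b).mp ⟨h, ha, hb⟩)).1
  have hGsys : IsSysEv (glue F1 F2 chan L0 A1 A2) :=
    glue_sysEv hsh h1sys h2sys hrel
  -- glue carrier and rel, unfolded
  have hGcarrier : (glue F1 F2 chan L0 A1 A2).carrier =
      LeftE F1 chan L0 A1 ∪ RightE F1 F2 chan L0 A2 := rfl
  have hGrel : (glue F1 F2 chan L0 A1 A2).rel = GRel F1 F2 chan L0 A1 A2 := rfl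
  -- all glue channels are F2 channels
  have hGch : ∀ e ∈ (glue F1 F2 chan L0 A1 A2).carrier, chan e ∈ F2.CH := by
    rintro e (he | he)
    · obtain ⟨-, hCH, hend⟩ := he
      rcases hend with h | h
      · exact (push_sender hsh hCH h).1
      · exact (push_recipt hsh hCH h).1
    · rcases he.2 with h | h
      · exact h.1
      · exact (lcut0_subset hsh h).1
  -- location conditions
  have hlocs : ∀ ℓ ∈ F2.LO,
      (∀ a ∈ evProj F2 chan (glue F1 F2 chan L0 A1 A2) ℓ,
        ∀ b ∈ evProj F2 chan (glue F1 F2 chan L0 A1 A2) ℓ,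
        (glue F1 F2 chan L0 A1 A2).rel a b ∨ (glue F1 F2 chan L0 A1 A2).rel b a) ∧
      projSeq F2 chan msg (glue F1 F2 chan L0 A1 A2) ℓ ∈ F2.traces ℓ := by
    intro ℓ hℓ
    by_cases hL0 : ℓ ∈ L0
    · -- shared location: the glue looks like A1 here
      have key1 : ∀ e ∈ evProj F1 chan A1 ℓ,
          e ∈ LeftE F1 chan L0 A1 ∧
          e ∈ evProj F2 chan (glue F1 F2 chan L0 A1 A2) ℓ := by
        rintro e ⟨he1, hend⟩
        have hCH : chan e ∈ F1.CH := h1ch e he1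
        have hL : e ∈ LeftE F1 chan L0 A1 := by
          refine ⟨he1, hCH, ?_⟩
          rcases hend with h | h
          · exact Or.inl (h ▸ hL0)
          · exact Or.inr (h ▸ hL0)
        refine ⟨hL, Or.inl hL, ?_⟩
        rcases hend with h | h
        · exact Or.inl ((shared_senderIff hsh hL0 (chan e)).mp ⟨hCH, h⟩).2
        · exact Or.inr ((shared_reciptIff hsh hL0 (chan e)).mp ⟨hCH, h⟩).2
      have key2 : ∀ e ∈ evProj F2 chan (glue F1 F2 chan L0 A1 A2) ℓ,
          e ∈ LeftE F1 chan L0 A1 ∧ e ∈ evProj F1 chan A1 ℓ := by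
        rintro e ⟨hcar, hend⟩
        have hCH2 : chan e ∈ F2.CH := hGch e hcar
        have hend1 : chan e ∈ F1.CH ∧
            (F1.sender (chan e) = ℓ ∨ F1.recipt (chan e) = ℓ) := by
          rcases hend with h | h
          · have := (shared_senderIff hsh hL0 (chan e)).mpr ⟨hCH2, h⟩
            exact ⟨this.1, Or.inl this.2⟩
          · have := (shared_reciptIff hsh hL0 (chan e)).mpr ⟨hCH2, h⟩
            exact ⟨this.1, Or.inr this.2⟩
        have he1 : e ∈ A1.carrier := by
          rcases hcar with h | h
          · exact h.1
          · -- right event at a shared location: must be a cut event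
            rcases h.2 with hr | hcut
            · exfalso
              rcases hend with hh | hh
              · exact hr.2.1 (hh ▸ hL0)
              · exact hr.2.2 (hh ▸ hL0)
            · exact (hcar e hcut).mpr h.1
        refine ⟨⟨he1, hend1.1, ?_⟩, he1, hend1.2⟩
        rcases hend1.2 with h | h
        · exact Or.inl (h ▸ hL0)
        · exact Or.inr (h ▸ hL0)
      have hproj : evProj F2 chan (glue F1 F2 chan L0 A1 A2) ℓ =
          evProj F1 chan A1 ℓ :=
        Set.ext fun e => ⟨fun h => (key2 e h).2, fun h => (key1 e h).2⟩
      have hrelproj : ∀ a ∈ evProj F2 chan (glue F1 F2 chan L0 A1 A2) ℓ,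
          ∀ b ∈ evProj F2 chan (glue F1 F2 chan L0 A1 A2) ℓ,
          ((glue F1 F2 chan L0 A1 A2).rel a b ↔ A1.rel a b) := by
        intro a ha b hb
        exact grel_left hsh h1sys hrel (key2 a ha).1 (key2 b hb).1
      have hℓ1 : ℓ ∈ F1.LO := hsh.1 hL0
      have hlin : ∀ a ∈ evProj F2 chan (glue F1 F2 chan L0 A1 A2) ℓ,
          ∀ b ∈ evProj F2 chan (glue F1 F2 chan L0 A1 A2) ℓ,
          (glue F1 F2 chan L0 A1 A2).rel a b ∨
            (glue F1 F2 chan L0 A1 A2).rel b a := by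
        intro a ha b hb
        rcases (h1loc ℓ hℓ1).1 a (key2 a ha).2 b (key2 b hb).2 with h | h
        · exact Or.inl ((hrelproj a ha b hb).mpr h)
        · exact Or.inr ((hrelproj b hb a ha).mpr h)
      refine ⟨hlin, ?_⟩
      have hps := projSeq_congr F2 F1 chan msg (glue F1 F2 chan L0 A1 A2) A1
        ℓ ℓ hproj hrelproj hlin hGsys
      rw [hps, ← (hsh.2.2 ℓ hL0).2.2]
      exact (h1loc ℓ hℓ1).2
    · -- non-shared location: the glue looks like A2 here
      have key2 : ∀ e ∈ evProj F2 chan (glue F1 F2 chan L0 A1 A2) ℓ,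
          e ∈ RightE F1 F2 chan L0 A2 ∧ e ∈ evProj F2 chan A2 ℓ := by
        rintro e ⟨hcar, hend⟩
        rcases hcar with h | h
        · -- a left event at ℓ ∉ L0 must be a cut event
          obtain ⟨he1, hCH, hend1⟩ := h
          have hcut : chan e ∈ lcut0 F1 L0 := by
            refine ⟨hCH, ?_⟩
            have hnb : ¬(F1.sender (chan e) ∈ L0 ∧ F1.recipt (chan e) ∈ L0) := by
              rintro ⟨hs, hr⟩
              obtain ⟨hCH2, hse⟩ := push_sender hsh hCH hs
              obtain ⟨-, hre⟩ := push_recipt hsh hCH hr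
              rcases hend with h | h
              · exact hL0 (h ▸ (hse ▸ hs))
              · exact hL0 (h ▸ (hre ▸ hr))
            rcases hend1 with h | h
            · exact Or.inl ⟨h, fun hr => hnb ⟨h, hr⟩⟩
            · exact Or.inr ⟨h, fun hs => hnb ⟨hs, h⟩⟩
          have he2 : e ∈ A2.carrier := (hcar e hcut).mp he1
          exact ⟨cut_mem_RightE hcut he2, he2, hend⟩
        · exact ⟨h, h.1, hend⟩
      have key1 : ∀ e ∈ evProj F2 chan A2 ℓ,
          e ∈ RightE F1 F2 chan L0 A2 ∧
          e ∈ evProj F2 chan (glue F1 F2 chan L0 A1 A2) ℓ := by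
        rintro e ⟨he2, hend⟩
        have hCH2 : chan e ∈ F2.CH := h2ch e he2
        have hR : e ∈ RightE F1 F2 chan L0 A2 := by
          refine ⟨he2, ?_⟩
          by_cases hs : F2.sender (chan e) ∈ L0
          · refine Or.inr ?_
            rw [lcut0_eq hsh]
            refine ⟨hCH2, Or.inl ⟨hs, fun hr => ?_⟩⟩
            rcases hend with h | h
            · exact hL0 (h ▸ hs)
            · exact hL0 (h ▸ hr)
          · by_cases hr : F2.recipt (chan e) ∈ L0
            · refine Or.inr ?_
              rw [lcut0_eq hsh]
              exact ⟨hCH2, Or.inr ⟨hr, hs⟩⟩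
            · exact Or.inl ⟨hCH2, hs, hr⟩
        exact ⟨hR, Or.inr hR, hend⟩
      have hproj : evProj F2 chan (glue F1 F2 chan L0 A1 A2) ℓ =
          evProj F2 chan A2 ℓ :=
        Set.ext fun e => ⟨fun h => (key2 e h).2, fun h => (key1 e h).2⟩
      have hrelproj : ∀ a ∈ evProj F2 chan (glue F1 F2 chan L0 A1 A2) ℓ,
          ∀ b ∈ evProj F2 chan (glue F1 F2 chan L0 A1 A2) ℓ,
          ((glue F1 F2 chan L0 A1 A2).rel a b ↔ A2.rel a b) := by
        intro a ha b hb
        exact grel_right hsh h2sys hrel (key2 a ha).1 (key2 b hb).1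
      have hlin : ∀ a ∈ evProj F2 chan (glue F1 F2 chan L0 A1 A2) ℓ,
          ∀ b ∈ evProj F2 chan (glue F1 F2 chan L0 A1 A2) ℓ,
          (glue F1 F2 chan L0 A1 A2).rel a b ∨
            (glue F1 F2 chan L0 A1 A2).rel b a := by
        intro a ha b hb
        rcases (h2loc ℓ hℓ).1 a (key2 a ha).2 b (key2 b hb).2 with h | h
        · exact Or.inl ((hrelproj a ha b hb).mpr h)
        · exact Or.inr ((hrelproj b hb a ha).mpr h)
      refine ⟨hlin, ?_⟩
      have hps := projSeq_congr F2 F2 chan msg (glue F1 F2 chan L0 A1 A2) A2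
        ℓ ℓ hproj hrelproj hlin hGsys
      rw [hps]
      exact (h2loc ℓ hℓ).2
  -- restriction to the cut is Bc
  have hcutEq : evRestrict chan (glue F1 F2 chan L0 A1 A2) (lcut0 F1 L0) = Bc := by
    apply evExt
    · ext e
      constructor
      · rintro ⟨hcar, hc⟩
        rcases hcar with h | h
        · exact (cutcar1 e).mp ⟨h.1, hc⟩
        · exact (cutcar2 e).mp ⟨h.1, hc⟩
      · intro h
        obtain ⟨h1, hc⟩ := (cutcar1 e).mpr h
        exact ⟨Or.inl (cut_mem_LeftE hc h1), hc⟩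
    · funext a b
      apply propext
      constructor
      · rintro ⟨g, hca, hcb⟩
        refine (cutrel1 a b).mp ⟨?_, hca, hcb⟩
        rcases g with ⟨r, -, -⟩ | ⟨r, -, -⟩ |
            ⟨m, ⟨r1, -, hmL⟩, ⟨r2, hmR, -⟩⟩ | ⟨m, ⟨r2, -, hmR⟩, ⟨r1, hmL, -⟩⟩
        · exact r
        · exact (hrel a b hca hcb).mpr r
        · exact h1sys.2.2.2.1 _ _ _ r1
            ((hrel m b (mem_cut_of_LR hsh hmL hmR) hcb).mpr r2)
        · exact h1sys.2.2.2.1 _ _ _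
            ((hrel a m hca (mem_cut_of_LR hsh hmL hmR)).mpr r2) r1
      · intro h
        obtain ⟨r, hca, hcb⟩ := (cutrel1 a b).mpr h
        have hab := h1sys.1 a b r
        exact ⟨Or.inl ⟨r, cut_mem_LeftE hca hab.1, cut_mem_LeftE hcb hab.2⟩,
          hca, hcb⟩
  -- restriction to lsrc is B'
  have hsrcNotR : ∀ e : E, chan e ∈ lsrc → e ∉ RightE F1 F2 chan L0 A2 := by
    rintro e hc ⟨-, h | h⟩
    · exact left_not_right hsh (hsrc hc).1 (Or.inl (hsrc hc).2.1) h
    · rcases h.2 with ⟨-, hr⟩ | ⟨-, hs⟩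
      · exact hr (hsrc hc).2.2
      · exact hs (hsrc hc).2.1
  have hsrcEq : evRestrict chan (glue F1 F2 chan L0 A1 A2) lsrc = B' := by
    rw [← hA1src]
    apply evExt
    · ext e
      constructor
      · rintro ⟨hcar, hc⟩
        rcases hcar with h | h
        · exact ⟨h.1, hc⟩
        · exact absurd h (hsrcNotR e hc)
      · rintro ⟨h1, hc⟩
        exact ⟨Or.inl ⟨h1, (hsrc hc).1, Or.inl (hsrc hc).2.1⟩, hc⟩
    · funext a b
      apply propext
      constructor
      · rintro ⟨g, hca, hcb⟩
        rcases g with ⟨r, -, -⟩ | ⟨r, ha, hb⟩ |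
            ⟨m, -, ⟨-, -, hb⟩⟩ | ⟨m, ⟨-, ha, -⟩, -⟩
        · exact ⟨r, hca, hcb⟩
        · exact absurd ha (hsrcNotR a hca)
        · exact absurd hb (hsrcNotR b hcb)
        · exact absurd ha (hsrcNotR a hca)
      · rintro ⟨r, hca, hcb⟩
        have hab := h1sys.1 a b r
        refine ⟨Or.inl ⟨r, ⟨hab.1, (hsrc hca).1, Or.inl (hsrc hca).2.1⟩,
          ⟨hab.2, (hsrc hcb).1, Or.inl (hsrc hcb).2.1⟩⟩, hca, hcb⟩
  exact ⟨glue F1 F2 chan L0 A1 A2, ⟨hGsys, hGch, hlocs⟩, hcutEq, hsrcEq⟩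

/-- if `L0` is shared between `F1` and `F2`, `lsrc ⊆ LEFT0`, and
`B_c` is an `lcut0`-run of both frames, then the `lsrc`-runs compatible with
`B_c` are the same in both frames. -/
theorem cmpt_eq_of_shared (F1 F2 : Frame Loc Chan D) (chan : E → Chan) (msg : E → D)
    (L0 : Set Loc) (hsh : Shared F1 F2 L0)
    (lsrc : Set Chan) (hsrc : lsrc ⊆ LEFT0 F1 L0)
    (Bc : EvStruct E)
    (hc1 : Bc ∈ lruns F1 chan msg (lcut0 F1 L0))
    (hc2 : Bc ∈ lruns F2 chan msg (lcut0 F1 L0)) :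
    cmpt F1 chan msg (lcut0 F1 L0) lsrc Bc =
      cmpt F2 chan msg (lcut0 F1 L0) lsrc Bc := by
  apply Set.Subset.antisymm
  · exact cmpt_sub_of_shared F1 F2 chan msg L0 hsh lsrc hsrc Bc hc2
  · have hsrc2 : lsrc ⊆ LEFT0 F2 L0 := fun c hc => LEFT0_subset hsh (hsrc hc)
    have hc1' : Bc ∈ lruns F1 chan msg (lcut0 F2 L0) := by
      rw [← lcut0_eq hsh]; exact hc1
    have h := cmpt_sub_of_shared F2 F1 chan msg L0 hsh.symm lsrc hsrc2 Bc hc1'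
    rw [← lcut0_eq hsh] at h
    exact h
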